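/- Let f : ℝⁿ × ℝᵐ → ℝ be twice continuously differentiable and let (x*,y*) be a local min-max critical point of f such that every eigenvalue of the matrix H = H(x*,y*) has nonzero real part. Then every eigenvalue λ of H satisfies Re(λ) < 0, and for every step size α with 0 < α < min over eigenvalues λ of H of (-Re(λ)/|λ|²), every eigenvalue of the Jacobian I + αH of the GDA map at (x*,y*) has modulus strictly less than 1; in particular (x*,y*) is GDA-stable for all sufficiently small α > 0. -/

import Mathlib

open Filter Topology MeasureTheory Matrix

noncomputable section

abbrev Euc (n : ℕ) : Type := EuclideanSpace ℝ (Fin n)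

/-- Partial gradient of `f` with respect to the first (`x`) variable. -/
noncomputable def gradX {n m : ℕ} (f : Euc n × Euc m → ℝ) (p : Euc n × Euc m) : Euc n :=
  gradient (fun x => f (x, p.2)) p.1

/-- Partial gradient of `f` with respect to the second (`y`) variable. -/
noncomputable def gradY {n m : ℕ} (f : Euc n × Euc m → ℝ) (p : Euc n × Euc m) : Euc m :=
  gradient (fun y => f (p.1, y)) p.2

/-- The GDA (gradient descent/ascent) update map with step size `α`:
`h(x,y) = (x - α ∇ₓ f(x,y), y + α ∇ᵧ f(x,y))`. -/
noncomputable def gda {n m : ℕ} (f : Euc n × Euc m → ℝ) (α : ℝ) (p : Euc n × Euc m) :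
    Euc n × Euc m :=
  (p.1 - α • gradX f p, p.2 + α • gradY f p)

/-- The standard basis vectors of `ℝⁿ × ℝᵐ`. -/
noncomputable def bVec (n m : ℕ) : Fin n ⊕ Fin m → Euc n × Euc m
  | Sum.inl i => (EuclideanSpace.single i 1, 0)
  | Sum.inr j => (0, EuclideanSpace.single j 1)

/-- Second directional derivative of `f` at `p` in directions `u, v`. -/
noncomputable def dD {n m : ℕ} (f : Euc n × Euc m → ℝ) (p u v : Euc n × Euc m) : ℝ :=
  fderiv ℝ (fun q => fderiv ℝ f q v) p u

/-- The matrix `H = [[-∇²ₓₓ f, -∇²ₓᵧ f], [∇²ᵧₓ f, ∇²ᵧᵧ f]]` of `f` at `p`. -/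
noncomputable def Hmat {n m : ℕ} (f : Euc n × Euc m → ℝ) (p : Euc n × Euc m) :
    Matrix (Fin n ⊕ Fin m) (Fin n ⊕ Fin m) ℝ :=
  Matrix.of fun i j =>
    (Sum.elim (fun _ => (-1 : ℝ)) (fun _ => (1 : ℝ)) i) * dD f p (bVec n m i) (bVec n m j)

/-- The set of complex eigenvalues of a real square matrix. -/
noncomputable def specC {ι : Type} [Fintype ι] [DecidableEq ι] (M : Matrix ι ι ℝ) : Set ℂ :=
  spectrum ℂ (M.map (Complex.ofReal))

/-- The Jacobian `I + αH` of the GDA update map at `p`. -/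
noncomputable def Jgda {n m : ℕ} (f : Euc n × Euc m → ℝ) (α : ℝ) (p : Euc n × Euc m) :
    Matrix (Fin n ⊕ Fin m) (Fin n ⊕ Fin m) ℝ :=
  1 + α • Hmat f p

/-- `(x*,y*)` is a local min-max point of `f`: there is a neighborhood `U` of `(x*,y*)`
such that `f(x*,y) ≤ f(x*,y*) ≤ f(x,y*)` for all `(x,y) ∈ U`. -/
def IsLocalMinMax {n m : ℕ} (f : Euc n × Euc m → ℝ) (p : Euc n × Euc m) : Prop :=
  ∃ U ∈ 𝓝 p, ∀ q ∈ U, f (p.1, q.2) ≤ f p ∧ f p ≤ f (q.1, p.2)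

/-! At a local min-max point, `x ↦ f (x, y*)` has a local minimum and `y ↦ f (x*, y)` a local
maximum, so `∇²ₓₓ f ⪰ 0` and `∇²ᵧᵧ f ⪯ 0`. By symmetry of the Hessian the off-diagonal blocks of
`H` cancel in its quadratic form, hence `uᵀ H u = -uₓᵀ ∇²ₓₓ f uₓ + uᵧᵀ ∇²ᵧᵧ f uᵧ ≤ 0` for every real
`u`. Testing this on the real and imaginary parts of a complex eigenvector gives `Re λ ≤ 0`, so
`Re λ < 0` by assumption. Finally `|1 + αλ|² = 1 + 2α Re λ + α²|λ|² < 1` as soon as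
`0 < α < -Re λ / |λ|²`, and these finitely many bounds are all positive. -/

/- If `c < 0` then `g' < 0` just to the right of `a`, so by the mean value theorem `g` drops
below `g a` there. -/
theorem IsLocalMin.nonneg_of_hasDerivAt_deriv {g φ : ℝ → ℝ} {a c : ℝ} (hmin : IsLocalMin g a)
    (hg : ∀ t, HasDerivAt g (φ t) t) (hφ : HasDerivAt φ c a) : 0 ≤ c := by
  by_contra! hc
  have hφa : φ a = 0 := hmin.hasDerivAt_eq_zero (hg a)
  have hsign := eventually_nhdsWithin_sign_eq_of_deriv_neg (hφ.deriv ▸ hc) hφa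
  have hright : ∀ᶠ t in 𝓝[>] a, φ t < 0 ∧ g a ≤ g t := by
    filter_upwards [nhdsWithin_le_nhds hsign, nhdsWithin_le_nhds hmin, self_mem_nhdsWithin]
      with t hst hgt (hat : a < t)
    rw [sign_eq_neg_one_iff.mpr (sub_neg.mpr hat), sign_eq_neg_one_iff] at hst
    exact ⟨hst, hgt⟩
  obtain ⟨δ, hδ, hsub⟩ := mem_nhdsGT_iff_exists_Ioo_subset.mp hright
  obtain ⟨t, hat, htδ⟩ := exists_between (show a < δ from hδ)
  obtain ⟨ξ, hξ, hslope⟩ := exists_hasDerivAt_eq_slope g φ hat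
    (fun x _ => (hg x).continuousAt.continuousWithinAt) (fun x _ => hg x)
  have hφξ : φ ξ < 0 := (hsub ⟨hξ.1, hξ.2.trans htδ⟩).1
  have hslope_nonneg : 0 ≤ (g t - g a) / (t - a) :=
    div_nonneg (sub_nonneg.mpr (hsub ⟨hat, htδ⟩).2) (sub_pos.mpr hat).le
  linarith

theorem IsLocalMax.nonpos_of_hasDerivAt_deriv {g φ : ℝ → ℝ} {a c : ℝ} (hmax : IsLocalMax g a)
    (hg : ∀ t, HasDerivAt g (φ t) t) (hφ : HasDerivAt φ c a) : c ≤ 0 :=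
  neg_nonneg.mp (hmax.neg.nonneg_of_hasDerivAt_deriv (fun t => (hg t).neg) hφ.neg)

section SecondDerivAlongLine

variable {E : Type*} [NormedAddCommGroup E] [NormedSpace ℝ E] {f : E → ℝ}

theorem tendsto_line_nhds_zero (p v : E) :
    Tendsto (fun t : ℝ => p + t • v) (𝓝 0) (𝓝 p) := by
  simpa using ((by fun_prop : Continuous fun t : ℝ => p + t • v).tendsto 0)

theorem hasDerivAt_comp_line (hf : Differentiable ℝ f) (p v : E) (t : ℝ) :
    HasDerivAt (fun s : ℝ => f (p + s • v)) (fderiv ℝ f (p + t • v) v) t :=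
  (hf _).hasFDerivAt.comp_hasDerivAt t
    ((((hasDerivAt_id t).smul_const v).const_add p).congr_deriv (one_smul ℝ v))

theorem hasDerivAt_fderiv_comp_line (hf : ContDiff ℝ 2 f) (p v : E) :
    HasDerivAt (fun t : ℝ => fderiv ℝ f (p + t • v) v) (fderiv ℝ (fderiv ℝ f) p v v) 0 := by
  have hf' : Differentiable ℝ (fderiv ℝ f) :=
    (hf.fderiv_right (m := 1) (by norm_num)).differentiable (by norm_num)
  have := (hasDerivAt_comp_line (f := fun q => fderiv ℝ f q v)
    (fun q => ((hf' q).clm_apply (differentiableAt_const v))) p v 0)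
  simpa [fderiv_clm_apply (hf' p) (differentiableAt_const v)] using this

theorem IsLocalMin.fderiv_fderiv_nonneg (hf : ContDiff ℝ 2 f) {p v : E}
    (hmin : IsLocalMin (fun t : ℝ => f (p + t • v)) 0) : 0 ≤ fderiv ℝ (fderiv ℝ f) p v v :=
  hmin.nonneg_of_hasDerivAt_deriv (hasDerivAt_comp_line (hf.differentiable two_ne_zero) p v)
    (hasDerivAt_fderiv_comp_line hf p v)

theorem IsLocalMax.fderiv_fderiv_nonpos (hf : ContDiff ℝ 2 f) {p v : E}
    (hmax : IsLocalMax (fun t : ℝ => f (p + t • v)) 0) : fderiv ℝ (fderiv ℝ f) p v v ≤ 0 :=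
  hmax.nonpos_of_hasDerivAt_deriv (hasDerivAt_comp_line (hf.differentiable two_ne_zero) p v)
    (hasDerivAt_fderiv_comp_line hf p v)

end SecondDerivAlongLine

section MinMax

variable {n m : ℕ} {f : Euc n × Euc m → ℝ} {p : Euc n × Euc m}

theorem IsLocalMinMax.isLocalMin_line (hmm : IsLocalMinMax f p) {v : Euc n × Euc m}
    (hv : v.2 = 0) : IsLocalMin (fun t : ℝ => f (p + t • v)) 0 := by
  obtain ⟨U, hU, hpU⟩ := hmm
  filter_upwards [(tendsto_line_nhds_zero p v).eventually_mem hU] with t ht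
  have hq : p + t • v = ((p + t • v).1, p.2) := Prod.ext rfl (by simp [hv])
  rw [zero_smul, add_zero, hq]
  exact (hpU _ ht).2

theorem IsLocalMinMax.isLocalMax_line (hmm : IsLocalMinMax f p) {v : Euc n × Euc m}
    (hv : v.1 = 0) : IsLocalMax (fun t : ℝ => f (p + t • v)) 0 := by
  obtain ⟨U, hU, hpU⟩ := hmm
  filter_upwards [(tendsto_line_nhds_zero p v).eventually_mem hU] with t ht
  have hq : p + t • v = (p.1, (p + t • v).2) := Prod.ext (by simp [hv]) rfl
  rw [zero_smul, add_zero, hq]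
  exact (hpU _ ht).1

end MinMax

section Hessian

variable {n m : ℕ} {f : Euc n × Euc m → ℝ}

theorem dD_eq_fderiv_fderiv (hf : ContDiff ℝ 2 f) (p u v : Euc n × Euc m) :
    dD f p u v = fderiv ℝ (fderiv ℝ f) p u v := by
  have hf' : Differentiable ℝ (fderiv ℝ f) :=
    (hf.fderiv_right (m := 1) (by norm_num)).differentiable (by norm_num)
  simp [dD, fderiv_clm_apply (hf' p) (differentiableAt_const v)]

theorem ContinuousLinearMap.sum_smul_apply_sum_smul {ι E : Type*} [Fintype ι]
    [NormedAddCommGroup E] [NormedSpace ℝ E] (B : E →L[ℝ] E →L[ℝ] ℝ) (c d : ι → ℝ) (x : ι → E) :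
    B (∑ i, c i • x i) (∑ j, d j • x j) = ∑ i, ∑ j, c i * d j * B (x i) (x j) := by
  simp only [map_sum, map_smul, _root_.sum_apply, _root_.smul_apply, smul_eq_mul, Finset.mul_sum]
  rw [Finset.sum_comm]
  exact Finset.sum_congr rfl fun i _ => Finset.sum_congr rfl fun j _ => by ring

theorem dotProduct_Hmat_mulVec (hf : ContDiff ℝ 2 f) (p : Euc n × Euc m)
    (u : Fin n ⊕ Fin m → ℝ) :
    u ⬝ᵥ (Hmat f p *ᵥ u) =
      fderiv ℝ (fderiv ℝ f) p (∑ j, u (.inr j) • bVec n m (.inr j))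
          (∑ j, u (.inr j) • bVec n m (.inr j)) -
        fderiv ℝ (fderiv ℝ f) p (∑ i, u (.inl i) • bVec n m (.inl i))
          (∑ i, u (.inl i) • bVec n m (.inl i)) := by
  set B := fderiv ℝ (fderiv ℝ f) p
  set X := ∑ i, u (.inl i) • bVec n m (.inl i)
  set Y := ∑ j, u (.inr j) • bVec n m (.inr j)
  have hsymm : B X Y = B Y X := ((hf.contDiffAt).isSymmSndFDerivAt (by simp)) X Y
  let s : Fin n ⊕ Fin m → ℝ := Sum.elim (fun _ => -1) (fun _ => 1)
  calc u ⬝ᵥ (Hmat f p *ᵥ u)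
      = ∑ i, ∑ j, (s i * u i) * u j * B (bVec n m i) (bVec n m j) := by
        simp only [dotProduct, mulVec, Hmat, of_apply, dD_eq_fderiv_fderiv hf, Finset.mul_sum]
        exact Finset.sum_congr rfl fun i _ => Finset.sum_congr rfl fun j _ => by ring
    _ = B (∑ i, (s i * u i) • bVec n m i) (∑ j, u j • bVec n m j) :=
        (B.sum_smul_apply_sum_smul _ _ _).symm
    _ = B (-X + Y) (X + Y) := by
        simp only [Fintype.sum_sum_type, s, Sum.elim_inl, Sum.elim_inr, neg_one_mul, one_mul,
          neg_smul, Finset.sum_neg_distrib, X, Y]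
    _ = B Y Y - B X X := by
        simp only [map_add, map_neg, _root_.add_apply, _root_.neg_apply, hsymm]
        ring

theorem IsLocalMinMax.dotProduct_Hmat_mulVec_nonpos (hf : ContDiff ℝ 2 f) {p : Euc n × Euc m}
    (hmm : IsLocalMinMax f p) (u : Fin n ⊕ Fin m → ℝ) : u ⬝ᵥ (Hmat f p *ᵥ u) ≤ 0 := by
  rw [dotProduct_Hmat_mulVec hf]
  have hX : (∑ i, u (.inl i) • bVec n m (.inl i)).2 = 0 := by simp [Prod.snd_sum, bVec]
  have hY : (∑ j, u (.inr j) • bVec n m (.inr j)).1 = 0 := by simp [Prod.fst_sum, bVec]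
  linarith [(hmm.isLocalMin_line hX).fderiv_fderiv_nonneg hf,
    (hmm.isLocalMax_line hY).fderiv_fderiv_nonpos hf]

end Hessian

theorem Matrix.exists_mulVec_eq_smul_of_mem_spectrum {ι K : Type*} [Fintype ι] [DecidableEq ι]
    [Field K] {A : Matrix ι ι K} {μ : K} (hμ : μ ∈ spectrum K A) :
    ∃ v : ι → K, v ≠ 0 ∧ A *ᵥ v = μ • v := by
  rw [← spectrum_toLin', ← Module.End.hasEigenvalue_iff_mem_spectrum] at hμ
  obtain ⟨v, hv⟩ := hμ.exists_hasEigenvector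
  exact ⟨v, hv.2, by simpa using hv.apply_eq_smul⟩

theorem Matrix.re_nonpos_of_mem_spectrum_map_ofReal {ι : Type*} [Fintype ι] [DecidableEq ι]
    {A : Matrix ι ι ℝ} (hA : ∀ u, u ⬝ᵥ (A *ᵥ u) ≤ 0) {μ : ℂ}
    (hμ : μ ∈ spectrum ℂ (A.map Complex.ofReal)) : μ.re ≤ 0 := by
  obtain ⟨v, hv0, hv⟩ := exists_mulVec_eq_smul_of_mem_spectrum hμ
  set a : ι → ℝ := fun i => (v i).re
  set b : ι → ℝ := fun i => (v i).im
  have hRe : A *ᵥ a = μ.re • a - μ.im • b := funext fun i => by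
    simpa [mulVec, dotProduct, Complex.re_sum, a, b] using congrArg Complex.re (congrFun hv i)
  have hIm : A *ᵥ b = μ.re • b + μ.im • a := funext fun i => by
    simpa [mulVec, dotProduct, Complex.im_sum, a, b, add_comm] using
      congrArg Complex.im (congrFun hv i)
  have hquad : a ⬝ᵥ (A *ᵥ a) + b ⬝ᵥ (A *ᵥ b) = μ.re * (a ⬝ᵥ a + b ⬝ᵥ b) := by
    simp only [hRe, hIm, dotProduct_sub, dotProduct_add, dotProduct_smul, smul_eq_mul,
      dotProduct_comm b a]
    ring
  have hpos : 0 < a ⬝ᵥ a + b ⬝ᵥ b := by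
    obtain ⟨i, hi⟩ := Function.ne_iff.mp hv0
    have hnormSq : a ⬝ᵥ a + b ⬝ᵥ b = ∑ j, Complex.normSq (v j) := by
      simp [dotProduct, Complex.normSq_apply, Finset.sum_add_distrib, a, b]
    rw [hnormSq]
    exact Finset.sum_pos' (fun j _ => Complex.normSq_nonneg _)
      ⟨i, Finset.mem_univ _, Complex.normSq_pos.mpr hi⟩
  refine le_of_mul_le_mul_right ?_ hpos
  linarith [hA a, hA b]

theorem specC_one_add_smul {ι : Type} [Fintype ι] [DecidableEq ι] (M : Matrix ι ι ℝ) {α : ℝ}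
    (hα : α ≠ 0) : specC (1 + α • M) = (fun μ : ℂ => 1 + α * μ) '' specC M := by
  have hα' : (α : ℂ) ≠ 0 := by exact_mod_cast hα
  have hmap : (1 + α • M).map Complex.ofReal =
      algebraMap ℂ _ 1 + Units.mk0 (α : ℂ) hα' • M.map Complex.ofReal := by
    ext i j
    simp [one_apply, apply_ite]
  rw [specC, hmap, ← spectrum.singleton_add_eq, spectrum.unit_smul_eq_smul, Set.singleton_add,
    ← Set.image_smul, Set.image_image]
  rfl

theorem Complex.norm_one_add_mul_lt_one {μ : ℂ} {α : ℝ} (hα : 0 < α)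
    (hαμ : α < -μ.re / ‖μ‖ ^ 2) : ‖1 + α * μ‖ < 1 := by
  have hμ : μ ≠ 0 := by
    rintro rfl
    linarith [show α < 0 by simpa using hαμ]
  have hbound : α * ‖μ‖ ^ 2 < -μ.re := (lt_div_iff₀ (by positivity)).mp hαμ
  have hsq : ‖1 + α * μ‖ ^ 2 = 1 + 2 * α * μ.re + α ^ 2 * ‖μ‖ ^ 2 := by
    simp only [Complex.sq_norm, normSq_apply, add_re, one_re, mul_re, ofReal_re, ofReal_im,
      zero_mul, sub_zero, add_im, one_im, mul_im, add_zero, zero_add]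
    ring
  have hre : μ.re < 0 := by nlinarith [sq_nonneg ‖μ‖]
  rw [← pow_lt_one_iff_of_nonneg (norm_nonneg _) two_ne_zero, hsq]
  nlinarith

theorem localMinMax_nonzero_re_gda_stable_general {n m : ℕ} (f : Euc n × Euc m → ℝ)
    (hf : ContDiff ℝ 2 f)
    (pstar : Euc n × Euc m)
    (hmm : IsLocalMinMax f pstar)
    (hre : ∀ μ ∈ specC (Hmat f pstar), μ.re ≠ 0) :
    (∀ μ ∈ specC (Hmat f pstar), μ.re < 0) ∧
    (∀ α : ℝ, 0 < α → (∀ μ ∈ specC (Hmat f pstar), α < -μ.re / ‖μ‖ ^ 2) →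
      ∀ ν ∈ specC (Jgda f α pstar), ‖ν‖ < 1) ∧
    ∃ β > (0 : ℝ), ∀ α : ℝ, 0 < α → α < β → ∀ ν ∈ specC (Jgda f α pstar), ‖ν‖ ≤ 1 := by
  have hneg : ∀ μ ∈ specC (Hmat f pstar), μ.re < 0 := fun μ hμ =>
    (re_nonpos_of_mem_spectrum_map_ofReal (hmm.dotProduct_Hmat_mulVec_nonpos hf) hμ).lt_of_ne
      (hre μ hμ)
  have hstable : ∀ α : ℝ, 0 < α → (∀ μ ∈ specC (Hmat f pstar), α < -μ.re / ‖μ‖ ^ 2) →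
      ∀ ν ∈ specC (Jgda f α pstar), ‖ν‖ < 1 := by
    intro α hα hαH ν hν
    rw [Jgda, specC_one_add_smul _ hα.ne'] at hν
    obtain ⟨μ, hμ, rfl⟩ := hν
    exact Complex.norm_one_add_mul_lt_one hα (hαH μ hμ)
  refine ⟨hneg, hstable, ?_⟩
  have hsmall : ∀ᶠ α in 𝓝[>] (0 : ℝ), ∀ μ ∈ specC (Hmat f pstar), α < -μ.re / ‖μ‖ ^ 2 := by
    refine (eventually_all_finite (Matrix.finite_spectrum _)).mpr fun μ hμ => ?_
    have hμ0 : μ ≠ 0 := fun h => by simpa [h] using hneg μ hμ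
    exact nhdsWithin_le_nhds <| eventually_lt_nhds <|
      div_pos (neg_pos.mpr (hneg μ hμ)) (by positivity)
  obtain ⟨β, hβ, hsub⟩ := mem_nhdsGT_iff_exists_Ioo_subset.mp hsmall
  exact ⟨β, hβ, fun α hα hαβ ν hν => (hstable α hα (hsub ⟨hα, hαβ⟩) ν hν).le⟩

/-- Let `(x*,y*)` be a local min-max critical point of a twice
continuously differentiable `f` such that every eigenvalue of `H = H(x*,y*)` has
nonzero real part.  Then every eigenvalue `λ` of `H` satisfies `Re(λ) < 0`; for every
step size `α` with `0 < α < minₗ (-Re(λ)/|λ|²)` every eigenvalue of the GDA Jacobian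
`I + αH` has modulus less than `1`; in particular `(x*,y*)` is GDA-stable for all
sufficiently small `α > 0`. -/
theorem localMinMax_nonzero_re_gda_stable {n m : ℕ} (f : Euc n × Euc m → ℝ)
    (hf : ContDiff ℝ 2 f)
    (pstar : Euc n × Euc m) (hcrit : fderiv ℝ f pstar = 0)
    (hmm : IsLocalMinMax f pstar)
    (hre : ∀ μ ∈ specC (Hmat f pstar), μ.re ≠ 0) :
    (∀ μ ∈ specC (Hmat f pstar), μ.re < 0) ∧
    (∀ α : ℝ, 0 < α → (∀ μ ∈ specC (Hmat f pstar), α < -μ.re / ‖μ‖ ^ 2) →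
      ∀ ν ∈ specC (Jgda f α pstar), ‖ν‖ < 1) ∧
    ∃ β > (0 : ℝ), ∀ α : ℝ, 0 < α → α < β → ∀ ν ∈ specC (Jgda f α pstar), ‖ν‖ ≤ 1 :=
  localMinMax_nonzero_re_gda_stable_general f hf pstar hmm hre
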